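/- For all real numbers x, s with x ≥ 0, setting Z m = L (2m) (Real.sqrt x) s - 2·s^m, the following identity holds in the ring of formal power series ℝ⟦X⟧: (PowerSeries.mk (fun n => Z (n+1))) · (1 - (x + 3s)·X + s·(x + 3s)·X^2 - s^3·X^3) = x·(1 + s·X), where X is the power series variable and real numbers are embedded as constant power series. -/

import Mathlib

/-- Bivariate Lucas polynomials. -/
def L : ℕ → ℝ → ℝ → ℝ
  | 0, _, _ => 2
  | 1, x, _ => x
  | n + 2, x, s => x * L (n + 1) x s + s * L n x s

/-!
Write `L n y s = αⁿ + βⁿ` with `α + β = y`, `αβ = -s`. Then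
`Z m = (α²)ᵐ + (β²)ᵐ - 2 sᵐ` is a combination of the geometric sequences with ratios `α²`, `β²`
and `s`, whose reversed characteristic polynomial is
`(1 - (y² + 2s) X + s² X²)(1 - s X) = 1 - (y² + 3s) X + s (y² + 3s) X² - s³ X³`.
So the series of the `Z (n + 1)` times this cubic is a polynomial of degree at most two,
determined by the first three terms; with `y = √x` these give `x + x s X`.
-/

namespace PowerSeries

variable {R : Type*} [CommRing R]

theorem mk_mul_eq_of_order_three_recurrence (w : ℕ → R) (a b c : R)
    (hw : ∀ n, w (n + 3) = a * w (n + 2) - b * w (n + 1) + c * w n) :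
    mk w * (1 - C a * X + C b * X ^ 2 - C c * X ^ 3) =
      C (w 0) + C (w 1 - a * w 0) * X + C (w 2 - a * w 1 + b * w 0) * X ^ 2 := by
  have expand : mk w * (1 - C a * X + C b * X ^ 2 - C c * X ^ 3) =
      mk w - C a * (mk w * X) + C b * (mk w * X ^ 2) - C c * (mk w * X ^ 3) := by ring
  rw [expand]
  ext n
  rcases n with _ | _ | _ | n
  · simp
  · simp [coeff_mul_X_pow']
  · simp [coeff_mul_X_pow']
  · simp [coeff_mul_X_pow', hw]
    ring

end PowerSeries

theorem L_add_four (x s : ℝ) (n : ℕ) :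
    L (n + 4) x s = (x ^ 2 + 2 * s) * L (n + 2) x s - s ^ 2 * L n x s := by
  simp only [L]
  ring

open PowerSeries in
theorem mk_L_even_sub_mul_eq (y s : ℝ) :
    (mk fun n => L (2 * (n + 1)) y s - 2 * s ^ (n + 1)) *
        (1 - C (y ^ 2 + 3 * s) * X + C (s * (y ^ 2 + 3 * s)) * X ^ 2 - C (s ^ 3) * X ^ 3) =
      C (y ^ 2) * (1 + C s * X) := by
  rw [mk_mul_eq_of_order_three_recurrence]
  · simp only [L]
    ring_nf
    simp only [map_zero, map_mul]
    ring
  · intro n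
    linear_combination L_add_four y s (2 * n + 4) - s * L_add_four y s (2 * n + 2)

open PowerSeries in
theorem stmt_5 (x s : ℝ) (hx : x ≥ 0) :
    (PowerSeries.mk fun n => L (2 * (n + 1)) (Real.sqrt x) s - 2 * s ^ (n + 1)) *
        (1 - PowerSeries.C (x + 3 * s) * PowerSeries.X +
          PowerSeries.C (s * (x + 3 * s)) * PowerSeries.X ^ 2 -
          PowerSeries.C (s ^ 3) * PowerSeries.X ^ 3) =
      PowerSeries.C x * (1 + PowerSeries.C s * PowerSeries.X) := by
  have h := mk_L_even_sub_mul_eq (Real.sqrt x) s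
  rwa [Real.sq_sqrt hx] at h
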